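/- arXiv:1407.8151 — 9 statements merged into one kernel-verified Lean document; each statement's English description precedes it below -/
import Mathlib

section
/- Let Θ be a finite set with at least two elements, m a mass function on Θ with belief function b, and x ∈ Θ. Among all mass functions m' on Θ focused on x, the L1 distance ∑_{∅ ⊊ B ⊊ Θ} |m(B) − m'(B)| attains its minimum, the minimal value is b(Θ \ {x}) = ∑_{∅ ⊊ B ⊆ Θ \ {x}} m(B), and the minimum is attained uniquely by the mass function m* defined by m*(B) = m(B) for every B with x ∈ B and B ≠ Θ, m*(Θ) = m(Θ) + b(Θ \ {x}), and m*(B) = 0 for every nonempty B with x ∉ B. -/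
open Finset

variable {Θ : Type*}

/-- A mass function (basic probability assignment) on a finite frame `Θ`:
`m ∅ = 0`, nonnegative, and total mass one. -/
def IsMass [Fintype Θ] (m : Finset Θ → ℝ) : Prop :=
  m ∅ = 0 ∧ (∀ A, 0 ≤ m A) ∧ ∑ A : Finset Θ, m A = 1

/-- The belief function of a mass function: `b(A) = ∑_{B ⊆ A} m(B)`. -/
def bel (m : Finset Θ → ℝ) (A : Finset Θ) : ℝ := ∑ B ∈ A.powerset, m B

/-- Singleton plausibility: `pl(x) = ∑_{B ∋ x} m(B)`. -/
def pl [Fintype Θ] [DecidableEq Θ] (m : Finset Θ → ℝ) (x : Θ) : ℝ :=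
  ∑ B ∈ Finset.univ.filter (fun B => x ∈ B), m B

/-- The core of a mass function: the intersection of all its focal elements. -/
def core (m : Finset Θ → ℝ) : Set Θ := ⋂ A ∈ {A : Finset Θ | m A ≠ 0}, (A : Set Θ)

/-- A mass function is consistent if its core is nonempty. -/
def Consistent (m : Finset Θ → ℝ) : Prop := (core m).Nonempty

/-- A mass function is focused on `x` if every focal element contains `x`. -/
def Focused (m : Finset Θ → ℝ) (x : Θ) : Prop := ∀ A, m A ≠ 0 → x ∈ A

/-- The partial L1 consistent approximation in the mass space:
among mass functions focused on `x`, the L1 distance (over nonempty proper subsets)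
is minimized, with minimal value `b({x}ᶜ)`, uniquely by `m*` which keeps the mass of
every `B ∋ x`, `B ≠ Θ`, reassigns `b({x}ᶜ)` to `Θ`, and vanishes elsewhere. -/
theorem stmt4 [Fintype Θ] [DecidableEq Θ] (hcard : 2 ≤ Fintype.card Θ)
    (m : Finset Θ → ℝ) (hm : IsMass m) (x : Θ)
    (mstar : Finset Θ → ℝ)
    (hstar : ∀ B : Finset Θ,
      mstar B = if B = Finset.univ then m Finset.univ + bel m ({x}ᶜ : Finset Θ)
                else if x ∈ B then m B else 0) :
    IsMass mstar ∧ Focused mstar x ∧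
    bel m ({x}ᶜ : Finset Θ) = ∑ B ∈ ({x}ᶜ : Finset Θ).powerset.filter (· ≠ ∅), m B ∧
    (∀ m' : Finset Θ → ℝ, IsMass m' → Focused m' x →
      bel m ({x}ᶜ : Finset Θ) ≤
        ∑ B ∈ Finset.univ.filter (fun B : Finset Θ => B ≠ ∅ ∧ B ≠ Finset.univ),
          |m B - m' B|) ∧
    (∑ B ∈ Finset.univ.filter (fun B : Finset Θ => B ≠ ∅ ∧ B ≠ Finset.univ),
        |m B - mstar B|) = bel m ({x}ᶜ : Finset Θ) ∧
    (∀ m' : Finset Θ → ℝ, IsMass m' → Focused m' x →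
      (∑ B ∈ Finset.univ.filter (fun B : Finset Θ => B ≠ ∅ ∧ B ≠ Finset.univ),
          |m B - m' B|) = bel m ({x}ᶜ : Finset Θ) →
      m' = mstar) := by
  classical
  obtain ⟨hm0, hmnn, hmsum⟩ := hm
  have hbelnn : 0 ≤ bel m ({x}ᶜ : Finset Θ) :=
    Finset.sum_nonneg fun B _ => hmnn B
  have hxU : ∀ B : Finset Θ, x ∉ B → B ≠ Finset.univ := by
    intro B hx h; exact hx (h ▸ Finset.mem_univ x)
  have hEU : (∅ : Finset Θ) ≠ Finset.univ := by
    intro h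
    have h2 := Finset.card_univ (α := Θ)
    rw [← h] at h2
    simp at h2
    omega
  have hpow : ({x}ᶜ : Finset Θ).powerset = Finset.univ.filter (fun B => x ∉ B) := by
    ext B
    simp [Finset.subset_compl_singleton]
  have hbel : bel m ({x}ᶜ : Finset Θ) = ∑ B ∈ Finset.univ.filter (fun B => x ∉ B), m B := by
    rw [bel, hpow]
  have hbelT : bel m ({x}ᶜ : Finset Θ)
      = ∑ B ∈ Finset.univ.filter (fun B : Finset Θ => x ∉ B ∧ B ≠ ∅), m B := by
    rw [hbel]
    refine (Finset.sum_subset ?_ ?_).symm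
    · intro B hB
      simp only [Finset.mem_filter, Finset.mem_univ, true_and] at hB ⊢
      exact hB.1
    · intro B hB hB'
      simp only [Finset.mem_filter, Finset.mem_univ, true_and, not_and, not_not] at hB hB'
      rw [hB' hB, hm0]
  have hTS : (Finset.univ.filter (fun B : Finset Θ => B ≠ ∅ ∧ B ≠ Finset.univ)).filter
      (fun B => ¬ x ∈ B) = Finset.univ.filter (fun B : Finset Θ => x ∉ B ∧ B ≠ ∅) := by
    ext B
    simp only [Finset.mem_filter, Finset.mem_univ, true_and]
    constructor
    · rintro ⟨⟨h1, h2⟩, h3⟩; exact ⟨h3, h1⟩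
    · rintro ⟨h1, h2⟩; exact ⟨⟨h2, hxU B h1⟩, h1⟩
  have hstar' : ∀ B : Finset Θ, mstar B
      = (if x ∈ B then m B else 0) + (if B = Finset.univ then bel m ({x}ᶜ : Finset Θ) else 0) := by
    intro B
    rw [hstar B]
    by_cases hB : B = Finset.univ
    · subst hB; simp
    · simp [hB]
  -- IsMass mstar
  have hsplit : ∑ B ∈ Finset.univ.filter (fun B : Finset Θ => x ∈ B), m B
      + ∑ B ∈ Finset.univ.filter (fun B : Finset Θ => x ∉ B), m B = 1 := by
    rw [Finset.sum_filter_add_sum_filter_not]; exact hmsum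
  have hmassStar : IsMass mstar := by
    refine ⟨?_, ?_, ?_⟩
    · rw [hstar]; simp [hEU]
    · intro B
      rw [hstar]
      split_ifs with h1 h2
      · exact add_nonneg (hmnn _) hbelnn
      · exact hmnn B
      · exact le_refl (0:ℝ)
    · calc ∑ B : Finset Θ, mstar B
          = ∑ B : Finset Θ, ((if x ∈ B then m B else 0)
              + (if B = Finset.univ then bel m ({x}ᶜ : Finset Θ) else 0)) :=
            Finset.sum_congr rfl fun B _ => hstar' B
        _ = (∑ B : Finset Θ, (if x ∈ B then m B else 0))
              + ∑ B : Finset Θ, (if B = Finset.univ then bel m ({x}ᶜ : Finset Θ) else 0) :=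
            Finset.sum_add_distrib
        _ = (∑ B ∈ Finset.univ.filter (fun B : Finset Θ => x ∈ B), m B)
              + bel m ({x}ᶜ : Finset Θ) := by
            rw [Finset.sum_ite_eq' Finset.univ (Finset.univ : Finset Θ)
              (fun _ => bel m ({x}ᶜ : Finset Θ)), ← Finset.sum_filter]
            simp
        _ = 1 := by rw [hbel]; linarith [hsplit]
  have hfocStar : Focused mstar x := by
    intro B hB
    rw [hstar] at hB
    by_cases h1 : B = Finset.univ
    · subst h1; exact Finset.mem_univ x
    · by_cases h2 : x ∈ B
      · exact h2
      · simp [h1, h2] at hB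
  -- the decomposition lemma
  have hdec : ∀ m' : Finset Θ → ℝ, Focused m' x →
      ∑ B ∈ Finset.univ.filter (fun B : Finset Θ => B ≠ ∅ ∧ B ≠ Finset.univ), |m B - m' B|
      = (∑ B ∈ (Finset.univ.filter (fun B : Finset Θ => B ≠ ∅ ∧ B ≠ Finset.univ)).filter
            (fun B => x ∈ B), |m B - m' B|) + bel m ({x}ᶜ : Finset Θ) := by
    intro m' hf
    rw [← Finset.sum_filter_add_sum_filter_not
      (Finset.univ.filter (fun B : Finset Θ => B ≠ ∅ ∧ B ≠ Finset.univ)) (fun B => x ∈ B)]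
    congr 1
    rw [hTS, hbelT]
    refine Finset.sum_congr rfl ?_
    intro B hB
    simp only [Finset.mem_filter, Finset.mem_univ, true_and] at hB
    have h0 : m' B = 0 := by
      by_contra h
      exact hB.1 (hf B h)
    rw [h0, sub_zero, abs_of_nonneg (hmnn B)]
  refine ⟨hmassStar, hfocStar, ?_, ?_, ?_, ?_⟩
  -- part 3
  · rw [hpow, Finset.filter_filter, hbelT]
  -- part 4 lower bound
  · intro m' hm' hf'
    rw [hdec m' hf']
    have : 0 ≤ ∑ B ∈ (Finset.univ.filter (fun B : Finset Θ => B ≠ ∅ ∧ B ≠ Finset.univ)).filter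
        (fun B => x ∈ B), |m B - m' B| :=
      Finset.sum_nonneg fun B _ => abs_nonneg _
    linarith
  -- part 5 value at mstar
  · rw [hdec mstar hfocStar]
    have h0 : ∑ B ∈ (Finset.univ.filter (fun B : Finset Θ => B ≠ ∅ ∧ B ≠ Finset.univ)).filter
        (fun B => x ∈ B), |m B - mstar B| = 0 := by
      refine Finset.sum_eq_zero ?_
      intro B hB
      simp only [Finset.mem_filter, Finset.mem_univ, true_and] at hB
      rw [hstar B, if_neg hB.1.2, if_pos hB.2]
      simp
    rw [h0, zero_add]
  -- part 6 uniqueness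
  · intro m' hm' hf' heq
    rw [hdec m' hf'] at heq
    have h0 : ∑ B ∈ (Finset.univ.filter (fun B : Finset Θ => B ≠ ∅ ∧ B ≠ Finset.univ)).filter
        (fun B => x ∈ B), |m B - m' B| = 0 := by linarith
    have hz : ∀ B ∈ (Finset.univ.filter (fun B : Finset Θ => B ≠ ∅ ∧ B ≠ Finset.univ)).filter
        (fun B => x ∈ B), |m B - m' B| = 0 :=
      (Finset.sum_eq_zero_iff_of_nonneg (fun B _ => abs_nonneg _)).mp h0
    have hagree : ∀ B : Finset Θ, B ≠ Finset.univ → m' B = mstar B := by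
      intro B hBu
      rw [hstar B, if_neg hBu]
      by_cases hx : x ∈ B
      · rw [if_pos hx]
        have hBne : B ≠ ∅ := Finset.ne_empty_of_mem hx
        have := hz B (by simp [hBne, hBu, hx])
        have := abs_eq_zero.mp this
        linarith [sub_eq_zero.mp this]
      · rw [if_neg hx]
        by_contra h
        exact hx (hf' B h)
    funext B
    by_cases hBu : B = Finset.univ
    · subst hBu
      have h1 := hm'.2.2
      have h2 := hmassStar.2.2
      rw [← Finset.add_sum_erase _ m' (Finset.mem_univ (Finset.univ : Finset Θ))] at h1
      rw [← Finset.add_sum_erase _ mstar (Finset.mem_univ (Finset.univ : Finset Θ))] at h2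
      have h3 : ∑ B ∈ Finset.univ.erase (Finset.univ : Finset Θ), m' B
          = ∑ B ∈ Finset.univ.erase (Finset.univ : Finset Θ), mstar B := by
        refine Finset.sum_congr rfl ?_
        intro B hB
        exact hagree B (Finset.ne_of_mem_erase hB)
      linarith
    · exact hagree B hBu
end

section
/- Let Θ be a finite set with at least two elements and m a mass function on Θ with singleton plausibility pl. Then the minimum over all consistent mass functions m' on Θ of the L1 distance ∑_{∅ ⊊ B ⊊ Θ} |m(B) − m'(B)| equals 1 − max_{x ∈ Θ} pl(x); moreover, for each fixed x ∈ Θ, the minimum of this distance over all mass functions m' focused on x equals 1 − pl(x). -/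
open Finset

variable {Θ : Type*}

lemma sum_notmem [Fintype Θ] [DecidableEq Θ] (m : Finset Θ → ℝ) (hm : IsMass m) (x : Θ) :
    ∑ B ∈ Finset.univ.filter (fun B : Finset Θ => x ∉ B), m B = 1 - pl m x := by
  have h := Finset.sum_filter_add_sum_filter_not Finset.univ (fun B : Finset Θ => x ∈ B) m
  rw [hm.2.2] at h
  have : pl m x = ∑ B ∈ Finset.univ.filter (fun B : Finset Θ => x ∈ B), m B := rfl
  linarith [h]

lemma sum_notmem' [Fintype Θ] [DecidableEq Θ] (m : Finset Θ → ℝ) (hm : IsMass m) (x : Θ) :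
    ∑ B ∈ Finset.univ.filter
      (fun B : Finset Θ => (B ≠ ∅ ∧ B ≠ Finset.univ) ∧ x ∉ B), m B = 1 - pl m x := by
  rw [← sum_notmem m hm x]
  apply Finset.sum_subset
  · intro B hB
    simp only [Finset.mem_filter] at hB ⊢
    exact ⟨hB.1, hB.2.2⟩
  · intro B hB hB'
    simp only [Finset.mem_filter] at hB hB'
    have hBu : B ≠ Finset.univ := fun h => hB.2 (h ▸ Finset.mem_univ x)
    have : B = ∅ := by
      by_contra h
      exact hB' ⟨hB.1, ⟨h, hBu⟩, hB.2⟩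
    rw [this, hm.1]

lemma pl_le_one [Fintype Θ] [DecidableEq Θ] (m : Finset Θ → ℝ) (hm : IsMass m) (x : Θ) :
    pl m x ≤ 1 := by
  have h := sum_notmem m hm x
  have : 0 ≤ ∑ B ∈ Finset.univ.filter (fun B : Finset Θ => x ∉ B), m B :=
    Finset.sum_nonneg fun B _ => hm.2.1 B
  linarith

/-- The shifted mass function: push all mass on sets not containing `x` onto `univ`. -/
noncomputable def shift [Fintype Θ] [DecidableEq Θ] (m : Finset Θ → ℝ) (x : Θ) :
    Finset Θ → ℝ :=
  fun B => (if x ∈ B then m B else 0) + (if B = Finset.univ then 1 - pl m x else 0)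

lemma shift_isMass [Fintype Θ] [DecidableEq Θ] [Nonempty Θ]
    (m : Finset Θ → ℝ) (hm : IsMass m) (x : Θ) : IsMass (shift m x) := by
  have hple := pl_le_one m hm x
  refine ⟨?_, ?_, ?_⟩
  · have hemp : (∅ : Finset Θ) ≠ Finset.univ := (Finset.univ_nonempty.ne_empty).symm
    simp [shift, hemp]
  · intro A
    apply add_nonneg
    · split <;> [exact hm.2.1 A; exact le_refl 0]
    · split <;> [linarith; exact le_refl 0]
  · simp only [shift]
    rw [Finset.sum_add_distrib]
    have h1 : ∑ A : Finset Θ, (if x ∈ A then m A else 0) = pl m x := by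
      rw [pl, Finset.sum_filter]
    have h2 : ∑ A : Finset Θ, (if A = Finset.univ then (1 - pl m x) else 0)
        = 1 - pl m x := by
      rw [Finset.sum_ite_eq' Finset.univ Finset.univ (fun _ => 1 - pl m x)]
      simp
    rw [h1, h2]; ring

lemma shift_focused [Fintype Θ] [DecidableEq Θ] (m : Finset Θ → ℝ) (x : Θ) :
    Focused (shift m x) x := by
  intro A hA
  by_contra hx
  have hAu : A ≠ Finset.univ := fun h => hx (h ▸ Finset.mem_univ x)
  simp [shift, hx, hAu] at hA

lemma shift_dist [Fintype Θ] [DecidableEq Θ] (m : Finset Θ → ℝ) (hm : IsMass m) (x : Θ) :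
    ∑ B ∈ Finset.univ.filter (fun B : Finset Θ => B ≠ ∅ ∧ B ≠ Finset.univ),
      |m B - shift m x B| = 1 - pl m x := by
  rw [← sum_notmem' m hm x]
  conv_rhs => rw [← Finset.filter_filter, Finset.sum_filter (fun B : Finset Θ => x ∉ B) m]
  apply Finset.sum_congr rfl
  intro B hB
  simp only [Finset.mem_filter] at hB
  by_cases hx : x ∈ B
  · simp [shift, hx, hB.2.2]
  · simp [shift, hx, hB.2.2, abs_of_nonneg (hm.2.1 B)]

lemma focused_lb [Fintype Θ] [DecidableEq Θ] (m m' : Finset Θ → ℝ) (hm : IsMass m)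
    (x : Θ) (hf : Focused m' x) :
    1 - pl m x ≤ ∑ B ∈ Finset.univ.filter (fun B : Finset Θ => B ≠ ∅ ∧ B ≠ Finset.univ),
      |m B - m' B| := by
  rw [← sum_notmem' m hm x]
  calc ∑ B ∈ Finset.univ.filter
        (fun B : Finset Θ => (B ≠ ∅ ∧ B ≠ Finset.univ) ∧ x ∉ B), m B
      ≤ ∑ B ∈ Finset.univ.filter
        (fun B : Finset Θ => (B ≠ ∅ ∧ B ≠ Finset.univ) ∧ x ∉ B), |m B - m' B| := by
        apply Finset.sum_le_sum
        intro B hB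
        simp only [Finset.mem_filter] at hB
        have hm'B : m' B = 0 := by
          by_contra h; exact hB.2.2 (hf B h)
        rw [hm'B, sub_zero]
        exact le_abs_self _
    _ ≤ ∑ B ∈ Finset.univ.filter
        (fun B : Finset Θ => B ≠ ∅ ∧ B ≠ Finset.univ), |m B - m' B| := by
        apply Finset.sum_le_sum_of_subset_of_nonneg
        · intro B hB
          simp only [Finset.mem_filter] at hB ⊢
          exact ⟨hB.1, hB.2.1⟩
        · intro B _ _; exact abs_nonneg _

/-- The minimal L1 distance (in the mass space) from `m` to the consistent
mass functions is `1 - max_x pl(x)`, and for each `x` the minimal distance to the mass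
functions focused on `x` is `1 - pl(x)`. -/
theorem stmt5 [Fintype Θ] [DecidableEq Θ] [Nonempty Θ] (hcard : 2 ≤ Fintype.card Θ)
    (m : Finset Θ → ℝ) (hm : IsMass m) :
    IsLeast {d : ℝ | ∃ m' : Finset Θ → ℝ, IsMass m' ∧ Consistent m' ∧
        d = ∑ B ∈ Finset.univ.filter (fun B : Finset Θ => B ≠ ∅ ∧ B ≠ Finset.univ),
              |m B - m' B|}
      (1 - Finset.univ.sup' Finset.univ_nonempty (pl m)) ∧
    ∀ x : Θ, IsLeast {d : ℝ | ∃ m' : Finset Θ → ℝ, IsMass m' ∧ Focused m' x ∧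
        d = ∑ B ∈ Finset.univ.filter (fun B : Finset Θ => B ≠ ∅ ∧ B ≠ Finset.univ),
              |m B - m' B|}
      (1 - pl m x) := by
  have hne : (Finset.univ : Finset Θ).Nonempty := Finset.univ_nonempty
  constructor
  · constructor
    · obtain ⟨x, -, hx⟩ := Finset.exists_mem_eq_sup' hne (pl m)
      refine ⟨shift m x, shift_isMass m hm x, ?_, ?_⟩
      · exact ⟨x, Set.mem_iInter₂.mpr fun A hA => shift_focused m x A hA⟩
      · rw [hx]; exact (shift_dist m hm x).symm
    · rintro d ⟨m', hm', hc, rfl⟩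
      obtain ⟨x, hx⟩ := hc
      have hfoc : Focused m' x := fun A hA => by
        have := Set.mem_iInter₂.mp hx A hA
        exact_mod_cast this
      have h1 := focused_lb m m' hm x hfoc
      have h2 : pl m x ≤ Finset.univ.sup' hne (pl m) :=
        Finset.le_sup' (pl m) (Finset.mem_univ x)
      linarith
  · intro x
    constructor
    · exact ⟨shift m x, shift_isMass m hm x, shift_focused m x, (shift_dist m hm x).symm⟩
    · rintro d ⟨m', hm', hfoc, rfl⟩
      exact focused_lb m m' hm x hfoc
end

section
/- Let Θ be a finite set with at least two elements, m a mass function on Θ, and x ∈ Θ. Set M = max_{∅ ⊊ C ⊊ Θ, x ∉ C} m(C). Over all functions ν : 2^Θ → ℝ with ν(B) = 0 whenever x ∉ B, the minimum of the L∞ distance max_{∅ ⊊ B ⊊ Θ} |m(B) − ν(B)| equals M; moreover such a ν attains this minimum if and only if |m(B) − ν(B)| ≤ M for every B with x ∈ B and B ≠ Θ. -/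
open Finset

variable {Θ : Type*}

/-- The partial L∞ consistent approximation in the mass space: over all
(possibly pseudo) mass assignments `ν` vanishing outside the filter of sets containing
`x`, the minimal L∞ distance is `M = max_{∅ ⊊ C ⊊ Θ, x ∉ C} m(C)`, and `ν` attains it
iff `|m(B) - ν(B)| ≤ M` for every `B ∋ x`, `B ≠ Θ`. -/
theorem stmt6 [Fintype Θ] [DecidableEq Θ] (hcard : 2 ≤ Fintype.card Θ)
    (m : Finset Θ → ℝ) (hm : IsMass m) (x : Θ)
    (h1 : (Finset.univ.filter
      (fun C : Finset Θ => C ≠ ∅ ∧ C ≠ Finset.univ ∧ x ∉ C)).Nonempty)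
    (h2 : (Finset.univ.filter
      (fun B : Finset Θ => B ≠ ∅ ∧ B ≠ Finset.univ)).Nonempty)
    (M : ℝ)
    (hM : M = (Finset.univ.filter
      (fun C : Finset Θ => C ≠ ∅ ∧ C ≠ Finset.univ ∧ x ∉ C)).sup' h1 m) :
    IsLeast {d : ℝ | ∃ ν : Finset Θ → ℝ, (∀ B : Finset Θ, x ∉ B → ν B = 0) ∧
        d = (Finset.univ.filter (fun B : Finset Θ => B ≠ ∅ ∧ B ≠ Finset.univ)).sup' h2
              (fun B => |m B - ν B|)} M ∧
    ∀ ν : Finset Θ → ℝ, (∀ B : Finset Θ, x ∉ B → ν B = 0) →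
      ((Finset.univ.filter (fun B : Finset Θ => B ≠ ∅ ∧ B ≠ Finset.univ)).sup' h2
          (fun B => |m B - ν B|) = M ↔
        ∀ B : Finset Θ, x ∈ B → B ≠ Finset.univ → |m B - ν B| ≤ M) := by
  obtain ⟨-, hnn, -⟩ := hm
  -- lower bound: any admissible ν has sup' ≥ M
  have lb : ∀ ν : Finset Θ → ℝ, (∀ B : Finset Θ, x ∉ B → ν B = 0) →
      M ≤ (Finset.univ.filter (fun B : Finset Θ => B ≠ ∅ ∧ B ≠ Finset.univ)).sup' h2
        (fun B => |m B - ν B|) := by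
    intro ν hν
    rw [hM]
    apply Finset.sup'_le
    intro C hC
    simp only [Finset.mem_filter] at hC
    obtain ⟨-, hne, hnu, hxC⟩ := hC
    have hmem : C ∈ Finset.univ.filter (fun B : Finset Θ => B ≠ ∅ ∧ B ≠ Finset.univ) := by
      simp [hne, hnu]
    calc m C = |m C - ν C| := by rw [hν C hxC, sub_zero, abs_of_nonneg (hnn C)]
      _ ≤ _ := Finset.le_sup' (fun B => |m B - ν B|) hmem
  -- upper bound given pointwise bound on sets containing x
  have ub : ∀ ν : Finset Θ → ℝ, (∀ B : Finset Θ, x ∉ B → ν B = 0) →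
      (∀ B : Finset Θ, x ∈ B → B ≠ Finset.univ → |m B - ν B| ≤ M) →
      (Finset.univ.filter (fun B : Finset Θ => B ≠ ∅ ∧ B ≠ Finset.univ)).sup' h2
        (fun B => |m B - ν B|) ≤ M := by
    intro ν hν hb
    apply Finset.sup'_le
    intro B hB
    simp only [Finset.mem_filter] at hB
    obtain ⟨-, hne, hnu⟩ := hB
    by_cases hx : x ∈ B
    · exact hb B hx hnu
    · rw [hν B hx, sub_zero, abs_of_nonneg (hnn B)]
      rw [hM]
      exact Finset.le_sup' m (by simp [hne, hnu, hx])
  have key : ∀ ν : Finset Θ → ℝ, (∀ B : Finset Θ, x ∉ B → ν B = 0) →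
      ((Finset.univ.filter (fun B : Finset Θ => B ≠ ∅ ∧ B ≠ Finset.univ)).sup' h2
          (fun B => |m B - ν B|) = M ↔
        ∀ B : Finset Θ, x ∈ B → B ≠ Finset.univ → |m B - ν B| ≤ M) := by
    intro ν hν
    constructor
    · intro heq B hxB hnu
      rw [← heq]
      have hne : B ≠ ∅ := by rintro rfl; simp at hxB
      exact Finset.le_sup' (fun B => |m B - ν B|) (by simp [hne, hnu])
    · intro hb
      exact le_antisymm (ub ν hν hb) (lb ν hν)
  refine ⟨⟨⟨fun B => if x ∈ B then m B else 0, fun B hB => by simp [hB], ?_⟩, ?_⟩, key⟩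
  · symm
    rw [key _ (fun B hB => by simp [hB])]
    intro B hxB hnu
    simp only [hxB, if_true, sub_self, abs_zero]
    rw [hM]
    obtain ⟨C, hC⟩ := h1.exists_mem
    simp only [Finset.mem_filter] at hC
    exact le_trans (hnn C) (Finset.le_sup' m (by simp [hC.2]))
  · rintro d ⟨ν, hν, rfl⟩
    exact lb ν hν
end

section
/- Let Θ be a finite set with at least two elements, m a mass function on Θ with belief function b, and x ∈ Θ. Among all mass functions m' on Θ focused on x, the squared L2 distance ∑_{∅ ⊊ B ⊊ Θ} (m(B) − m'(B))² (sum over nonempty proper subsets, i.e. the (N−2)-dimensional representation) is minimized uniquely by the mass function m* with m*(B) = m(B) for every B with x ∈ B and B ≠ Θ, m*(Θ) = m(Θ) + b(Θ \ {x}), and m*(B) = 0 for every nonempty B with x ∉ B; that is, it coincides with the partial L1 consistent approximation in the mass space. -/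
open Finset

variable {Θ : Type*}

/-- In the (N−2)-dimensional mass-space representation, the squared L2
distance over mass functions focused on `x` is minimized uniquely by the same `m*` as
the partial L1 approximation. -/
theorem stmt7 [Fintype Θ] [DecidableEq Θ] (hcard : 2 ≤ Fintype.card Θ)
    (m : Finset Θ → ℝ) (hm : IsMass m) (x : Θ)
    (mstar : Finset Θ → ℝ)
    (hstar : ∀ B : Finset Θ,
      mstar B = if B = Finset.univ then m Finset.univ + bel m ({x}ᶜ : Finset Θ)
                else if x ∈ B then m B else 0) :
    IsMass mstar ∧ Focused mstar x ∧
    (∀ m' : Finset Θ → ℝ, IsMass m' → Focused m' x →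
      (∑ B ∈ Finset.univ.filter (fun B : Finset Θ => B ≠ ∅ ∧ B ≠ Finset.univ),
          (m B - mstar B) ^ 2) ≤
        ∑ B ∈ Finset.univ.filter (fun B : Finset Θ => B ≠ ∅ ∧ B ≠ Finset.univ),
          (m B - m' B) ^ 2) ∧
    (∀ m' : Finset Θ → ℝ, IsMass m' → Focused m' x →
      (∑ B ∈ Finset.univ.filter (fun B : Finset Θ => B ≠ ∅ ∧ B ≠ Finset.univ),
          (m B - m' B) ^ 2) =
        (∑ B ∈ Finset.univ.filter (fun B : Finset Θ => B ≠ ∅ ∧ B ≠ Finset.univ),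
          (m B - mstar B) ^ 2) →
      m' = mstar) := by

  classical
  obtain ⟨hm0, hmnn, hmsum⟩ := hm
  have hstar_mem : ∀ B : Finset Θ, x ∈ B → B ≠ Finset.univ → mstar B = m B := by
    intro B hx hB; rw [hstar]; simp [hB, hx]
  have hstar_not : ∀ B : Finset Θ, x ∉ B → mstar B = 0 := by
    intro B hx
    have hB : B ≠ Finset.univ := fun h => hx (h ▸ Finset.mem_univ x)
    rw [hstar]; simp [hB, hx]
  have hstar_univ : mstar Finset.univ = m Finset.univ + bel m ({x}ᶜ : Finset Θ) := by
    rw [hstar]; simp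
  have hbel_nn : 0 ≤ bel m ({x}ᶜ : Finset Θ) := Finset.sum_nonneg fun B _ => hmnn B
  have hbel_eq : bel m ({x}ᶜ : Finset Θ)
      = ∑ B ∈ Finset.univ.filter (fun B : Finset Θ => x ∉ B), m B := by
    unfold bel
    refine Finset.sum_congr ?_ (fun _ _ => rfl)
    ext B
    simp [Finset.mem_powerset, Finset.subset_compl_singleton]
  have hfoc : Focused mstar x := by
    intro B hB
    by_contra hx
    exact hB (hstar_not B hx)
  -- sum decomposition for any function
  have hsplit : ∀ f : Finset Θ → ℝ, ∑ A : Finset Θ, f A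
      = f Finset.univ
        + ∑ A ∈ (Finset.univ.filter (fun B : Finset Θ => x ∈ B)).erase Finset.univ, f A
        + ∑ A ∈ Finset.univ.filter (fun B : Finset Θ => x ∉ B), f A := by
    intro f
    rw [← Finset.sum_filter_add_sum_filter_not Finset.univ (fun B : Finset Θ => x ∈ B) f]
    congr 1
    rw [← Finset.add_sum_erase _ f (show (Finset.univ : Finset Θ) ∈
      Finset.univ.filter (fun B : Finset Θ => x ∈ B) by simp)]
  have herase_eq : ∑ A ∈ (Finset.univ.filter (fun B : Finset Θ => x ∈ B)).erase Finset.univ,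
      mstar A = ∑ A ∈ (Finset.univ.filter (fun B : Finset Θ => x ∈ B)).erase Finset.univ, m A := by
    refine Finset.sum_congr rfl ?_
    intro A hA
    rw [Finset.mem_erase, Finset.mem_filter] at hA
    exact hstar_mem A hA.2.2 hA.1
  have hsum_star : ∑ A : Finset Θ, mstar A = 1 := by
    rw [hsplit mstar, herase_eq, hstar_univ]
    have h2 : ∑ A ∈ Finset.univ.filter (fun B : Finset Θ => x ∉ B), mstar A = 0 :=
      Finset.sum_eq_zero fun A hA => hstar_not A (Finset.mem_filter.mp hA).2
    rw [h2, hbel_eq]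
    have := hsplit m
    rw [hmsum] at this
    linarith
  have hmass : IsMass mstar := by
    refine ⟨hstar_not ∅ (Finset.notMem_empty x), fun A => ?_, hsum_star⟩
    rw [hstar]
    split
    · exact add_nonneg (hmnn _) hbel_nn
    · split
      · exact hmnn _
      · exact le_rfl
  -- distance decomposition
  set s := Finset.univ.filter (fun B : Finset Θ => B ≠ ∅ ∧ B ≠ Finset.univ) with hs
  have hdist : ∀ m' : Finset Θ → ℝ, Focused m' x →
      ∑ B ∈ s, (m B - m' B) ^ 2
      = (∑ B ∈ s.filter (fun B => x ∈ B), (m B - m' B) ^ 2)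
        + ∑ B ∈ s.filter (fun B => x ∉ B), (m B) ^ 2 := by
    intro m' hf
    rw [← Finset.sum_filter_add_sum_filter_not s (fun B : Finset Θ => x ∈ B)]
    congr 1
    refine Finset.sum_congr rfl ?_
    intro B hB
    rw [Finset.mem_filter] at hB
    have : m' B = 0 := by
      by_contra h; exact hB.2 (hf B h)
    rw [this, sub_zero]
  have hdist_star : ∑ B ∈ s, (m B - mstar B) ^ 2
      = ∑ B ∈ s.filter (fun B => x ∉ B), (m B) ^ 2 := by
    rw [hdist mstar hfoc]
    have : ∑ B ∈ s.filter (fun B => x ∈ B), (m B - mstar B) ^ 2 = 0 := by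
      refine Finset.sum_eq_zero ?_
      intro B hB
      rw [Finset.mem_filter, hs, Finset.mem_filter] at hB
      rw [hstar_mem B hB.2 hB.1.2.2, sub_self]
      ring
    rw [this, zero_add]
  refine ⟨hmass, hfoc, ?_, ?_⟩
  · intro m' hm' hf'
    rw [hdist_star, hdist m' hf']
    have : 0 ≤ ∑ B ∈ s.filter (fun B => x ∈ B), (m B - m' B) ^ 2 :=
      Finset.sum_nonneg fun B _ => sq_nonneg _
    linarith
  · intro m' hm' hf' heq
    obtain ⟨hm'0, hm'nn, hm'sum⟩ := hm'
    rw [hdist_star, hdist m' hf'] at heq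
    have hzero : ∑ B ∈ s.filter (fun B => x ∈ B), (m B - m' B) ^ 2 = 0 := by linarith
    have hterm : ∀ B ∈ s.filter (fun B => x ∈ B), (m B - m' B) ^ 2 = 0 := by
      intro B hB
      have := Finset.sum_eq_zero_iff_of_nonneg (fun B _ => sq_nonneg (m B - m' B)) |>.mp hzero
      exact this B hB
    have hagree : ∀ B : Finset Θ, B ≠ Finset.univ → m' B = mstar B := by
      intro B hB
      by_cases hx : x ∈ B
      · have hBne : B ≠ ∅ := fun h => Finset.notMem_empty x (h ▸ hx)
        have hBmem : B ∈ s.filter (fun B => x ∈ B) := by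
          rw [Finset.mem_filter, hs, Finset.mem_filter]
          exact ⟨⟨Finset.mem_univ B, hBne, hB⟩, hx⟩
        have := hterm B hBmem
        have h2 : m B - m' B = 0 := by
          have := sq_eq_zero_iff.mp this
          exact this
        rw [hstar_mem B hx hB]
        linarith
      · have h1 : m' B = 0 := by
          by_contra h; exact hx (hf' B h)
        rw [h1, hstar_not B hx]
    funext B
    by_cases hB : B = Finset.univ
    · subst hB
      have h1 := hsplit m'
      have h2 := hsplit mstar
      rw [hm'sum] at h1
      rw [hsum_star] at h2
      have h3 : ∑ A ∈ (Finset.univ.filter (fun B : Finset Θ => x ∈ B)).erase Finset.univ,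
          m' A = ∑ A ∈ (Finset.univ.filter (fun B : Finset Θ => x ∈ B)).erase Finset.univ,
          mstar A := by
        refine Finset.sum_congr rfl ?_
        intro A hA
        exact hagree A (Finset.mem_erase.mp hA).1
      have h4 : ∑ A ∈ Finset.univ.filter (fun B : Finset Θ => x ∉ B), m' A
          = ∑ A ∈ Finset.univ.filter (fun B : Finset Θ => x ∉ B), mstar A := by
        refine Finset.sum_congr rfl ?_
        intro A hA
        exact hagree A (fun h => (Finset.mem_filter.mp hA).2 (h ▸ Finset.mem_univ x))
      rw [h3, h4] at h1
      linarith
    · exact hagree B hB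
end

section
/- Let Θ be a finite set with at least two elements, of cardinality n, m a mass function on Θ with belief function b, and x ∈ Θ. Among all mass functions m' on Θ focused on x, the squared L2 distance ∑_{∅ ⊊ B ⊆ Θ} (m(B) − m'(B))² (sum over all nonempty subsets including Θ, i.e. the (N−1)-dimensional representation) is minimized uniquely by the mass function m* with m*(B) = m(B) + b(Θ \ {x})/2^{n−1} for every B with x ∈ B, and m*(B) = 0 for every nonempty B with x ∉ B; the minimal value equals b(Θ \ {x})²/2^{n−1} + ∑_{∅ ⊊ B ⊆ Θ \ {x}} m(B)². -/
open Finset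

variable {Θ : Type*}

/-- In the (N−1)-dimensional mass-space representation, the squared L2
distance over mass functions focused on `x` is minimized uniquely by the mass function
adding `b({x}ᶜ)/2^(n-1)` to every set of the filter, with minimal value
`b({x}ᶜ)²/2^(n-1) + ∑_{∅ ⊊ B ⊆ {x}ᶜ} m(B)²`. -/
theorem stmt8 [Fintype Θ] [DecidableEq Θ] (n : ℕ) (hn : n = Fintype.card Θ)
    (hcard : 2 ≤ n)
    (m : Finset Θ → ℝ) (hm : IsMass m) (x : Θ)
    (mstar : Finset Θ → ℝ)
    (hstar : ∀ B : Finset Θ,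
      mstar B = if x ∈ B then m B + bel m ({x}ᶜ : Finset Θ) / 2 ^ (n - 1) else 0) :
    IsMass mstar ∧ Focused mstar x ∧
    (∀ m' : Finset Θ → ℝ, IsMass m' → Focused m' x →
      (bel m ({x}ᶜ : Finset Θ)) ^ 2 / 2 ^ (n - 1) +
          ∑ B ∈ ({x}ᶜ : Finset Θ).powerset.filter (· ≠ ∅), (m B) ^ 2 ≤
        ∑ B ∈ Finset.univ.filter (fun B : Finset Θ => B ≠ ∅), (m B - m' B) ^ 2) ∧
    (∑ B ∈ Finset.univ.filter (fun B : Finset Θ => B ≠ ∅), (m B - mstar B) ^ 2) =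
      (bel m ({x}ᶜ : Finset Θ)) ^ 2 / 2 ^ (n - 1) +
        ∑ B ∈ ({x}ᶜ : Finset Θ).powerset.filter (· ≠ ∅), (m B) ^ 2 ∧
    (∀ m' : Finset Θ → ℝ, IsMass m' → Focused m' x →
      (∑ B ∈ Finset.univ.filter (fun B : Finset Θ => B ≠ ∅), (m B - m' B) ^ 2) =
        (bel m ({x}ᶜ : Finset Θ)) ^ 2 / 2 ^ (n - 1) +
          ∑ B ∈ ({x}ᶜ : Finset Θ).powerset.filter (· ≠ ∅), (m B) ^ 2 →
      m' = mstar) := by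
  obtain ⟨hm0, hmnn, hms⟩ := hm
  set S : Finset (Finset Θ) := univ.filter (fun B => x ∈ B) with hS
  set c : ℝ := bel m ({x}ᶜ : Finset Θ) with hc
  set K : ℝ := (2 : ℝ) ^ (n - 1) with hK
  have hKpos : (0 : ℝ) < K := by positivity
  set t : ℝ := c / K with ht
  have hpc : ({x}ᶜ : Finset Θ).powerset = univ.filter (fun B => x ∉ B) := by
    ext B; simp [Finset.subset_compl_singleton]
  have hn1 : 1 ≤ n := by omega
  have hcardS : S.card = 2 ^ (n - 1) := by
    have h1 : (univ.filter (fun B : Finset Θ => x ∉ B)).card = 2 ^ (n - 1) := by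
      rw [← hpc]; simp [Finset.card_powerset, Finset.card_compl, hn]
    have h2 := Finset.card_filter_add_card_filter_not
      (s := (univ : Finset (Finset Θ))) (p := fun B => x ∈ B)
    have h3 : (univ : Finset (Finset Θ)).card = 2 ^ n := by
      simp [Fintype.card_finset, hn]
    obtain ⟨k, hk⟩ : ∃ k, n = k + 1 := ⟨n - 1, by omega⟩
    simp only [hS]
    have hk' : n - 1 = k := by omega
    rw [hk'] at h1 ⊢
    rw [hk, pow_succ] at h3
    omega
  have hcval : c = ∑ B ∈ univ.filter (fun B : Finset Θ => x ∉ B), m B := by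
    rw [hc, bel, hpc]
  have hcnn : 0 ≤ c := by
    rw [hcval]; exact Finset.sum_nonneg fun B _ => hmnn B
  have htnn : 0 ≤ t := div_nonneg hcnn hKpos.le
  have hsummS : ∑ B ∈ S, m B = 1 - c := by
    have h := Finset.sum_filter_add_sum_filter_not (univ : Finset (Finset Θ))
      (fun B => x ∈ B) m
    rw [hms] at h
    rw [hcval]; linarith [h]
  -- splitting the nonempty-sets filter
  have hsplit1 : (univ.filter (fun B : Finset Θ => B ≠ ∅)).filter (fun B => x ∈ B) = S := by
    ext B
    simp only [hS, Finset.mem_filter, Finset.mem_univ, true_and]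
    exact ⟨fun h => h.2, fun h => ⟨Finset.ne_empty_of_mem h, h⟩⟩
  have hsplit2 : (univ.filter (fun B : Finset Θ => B ≠ ∅)).filter (fun B => x ∉ B)
      = ({x}ᶜ : Finset Θ).powerset.filter (· ≠ ∅) := by
    rw [hpc]
    ext B
    simp only [Finset.mem_filter, Finset.mem_univ, true_and]
    tauto
  have hsplit : ∀ g : Finset Θ → ℝ,
      ∑ B ∈ univ.filter (fun B : Finset Θ => B ≠ ∅), g B
        = ∑ B ∈ S, g B + ∑ B ∈ ({x}ᶜ : Finset Θ).powerset.filter (· ≠ ∅), g B := by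
    intro g
    rw [← Finset.sum_filter_add_sum_filter_not
      (univ.filter (fun B : Finset Θ => B ≠ ∅)) (fun B => x ∈ B) g, hsplit1, hsplit2]
  -- mstar is a mass function
  have hstar0 : mstar ∅ = 0 := by rw [hstar]; simp
  have hmass : IsMass mstar := by
    refine ⟨hstar0, fun A => ?_, ?_⟩
    · rw [hstar A]
      split
      · have : 0 ≤ c / K := htnn
        have := hmnn A
        rw [hK] at *
        positivity
      · exact le_refl 0
    · have h := Finset.sum_filter_add_sum_filter_not (univ : Finset (Finset Θ))
        (fun B => x ∈ B) mstar
      have h1 : ∑ B ∈ univ.filter (fun B : Finset Θ => x ∉ B), mstar B = 0 := by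
        apply Finset.sum_eq_zero
        intro B hB
        simp only [Finset.mem_filter] at hB
        rw [hstar B, if_neg hB.2]
      have h2 : ∑ B ∈ S, mstar B = 1 := by
        have : ∀ B ∈ S, mstar B = m B + t := by
          intro B hB
          simp only [hS, Finset.mem_filter] at hB
          rw [hstar B, if_pos hB.2]
        rw [Finset.sum_congr rfl this, Finset.sum_add_distrib, hsummS,
          Finset.sum_const, hcardS, nsmul_eq_mul]
        have : ((2 : ℝ) ^ (n - 1)) * t = c := by
          rw [ht, hK]; field_simp
        push_cast
        rw [this]; ring
      rw [← h, h2, h1]; ring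
  have hfoc : Focused mstar x := by
    intro A hA
    by_contra hx
    rw [hstar A, if_neg hx] at hA
    exact hA rfl
  -- key identity
  have key : ∀ m' : Finset Θ → ℝ, IsMass m' → Focused m' x →
      ∑ B ∈ univ.filter (fun B : Finset Θ => B ≠ ∅), (m B - m' B) ^ 2
        = (∑ B ∈ S, (m' B - m B - t) ^ 2) + c ^ 2 / K
          + ∑ B ∈ ({x}ᶜ : Finset Θ).powerset.filter (· ≠ ∅), (m B) ^ 2 := by
    intro m' hm' hf'
    obtain ⟨hm'0, hm'nn, hm's⟩ := hm'
    have hzero : ∀ B : Finset Θ, x ∉ B → m' B = 0 := by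
      intro B hB; by_contra h; exact hB (hf' B h)
    have hsumm'S : ∑ B ∈ S, m' B = 1 := by
      have h := Finset.sum_filter_add_sum_filter_not (univ : Finset (Finset Θ))
        (fun B => x ∈ B) m'
      have h1 : ∑ B ∈ univ.filter (fun B : Finset Θ => x ∉ B), m' B = 0 :=
        Finset.sum_eq_zero fun B hB => hzero B (Finset.mem_filter.mp hB).2
      rw [hm's] at h
      rw [hS]; linarith [h, h1]
    have hd : ∑ B ∈ S, (m' B - m B) = c := by
      rw [Finset.sum_sub_distrib, hsumm'S, hsummS]; ring
    rw [hsplit]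
    have hP : ∑ B ∈ ({x}ᶜ : Finset Θ).powerset.filter (· ≠ ∅), (m B - m' B) ^ 2
        = ∑ B ∈ ({x}ᶜ : Finset Θ).powerset.filter (· ≠ ∅), (m B) ^ 2 := by
      apply Finset.sum_congr rfl
      intro B hB
      simp only [Finset.mem_filter, hpc, Finset.mem_univ, true_and] at hB
      rw [hzero B hB.1, sub_zero]
    rw [hP]
    have hSsum : ∑ B ∈ S, (m B - m' B) ^ 2
        = (∑ B ∈ S, (m' B - m B - t) ^ 2) + c ^ 2 / K := by
      have expand : ∀ B ∈ S, (m B - m' B) ^ 2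
          = (m' B - m B - t) ^ 2 + 2 * t * (m' B - m B) - t ^ 2 := by
        intro B _; ring
      rw [Finset.sum_congr rfl expand]
      rw [Finset.sum_sub_distrib, Finset.sum_add_distrib, ← Finset.mul_sum, hd,
        Finset.sum_const, hcardS, nsmul_eq_mul]
      have hKcast : ((2 ^ (n - 1) : ℕ) : ℝ) = K := by rw [hK]; push_cast; ring
      rw [hKcast]
      have : 2 * t * c - K * t ^ 2 = c ^ 2 / K := by
        rw [ht]; field_simp; ring
      linarith [this]
    rw [hSsum]
  -- value at mstar
  have hstarzero : ∑ B ∈ S, (mstar B - m B - t) ^ 2 = 0 := by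
    apply Finset.sum_eq_zero
    intro B hB
    simp only [hS, Finset.mem_filter] at hB
    rw [hstar B, if_pos hB.2]
    simp [ht, hK]
  refine ⟨hmass, hfoc, ?_, ?_, ?_⟩
  · intro m' hm' hf'
    rw [key m' hm' hf']
    have : 0 ≤ ∑ B ∈ S, (m' B - m B - t) ^ 2 :=
      Finset.sum_nonneg fun B _ => sq_nonneg _
    rw [hK] at *
    linarith
  · rw [key mstar hmass hfoc, hstarzero, hK]; ring
  · intro m' hm' hf' heq
    rw [key m' hm' hf'] at heq
    have hz : ∑ B ∈ S, (m' B - m B - t) ^ 2 = 0 := by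
      rw [hK] at heq; linarith
    have hall : ∀ B ∈ S, (m' B - m B - t) ^ 2 = 0 :=
      (Finset.sum_eq_zero_iff_of_nonneg fun B _ => sq_nonneg _).mp hz
    funext B
    by_cases hxB : x ∈ B
    · have hB : B ∈ S := by simp [hS, hxB]
      have := hall B hB
      have h2 : m' B - m B - t = 0 := by
        exact pow_eq_zero_iff (by norm_num) |>.mp this
      rw [hstar B, if_pos hxB]
      have : m' B = m B + t := by linarith
      rw [this, ht, hK]
    · rw [hstar B, if_neg hxB]
      by_contra h
      exact hxB (hf' B h)
end

section
/- Let Θ be a finite set with at least two elements, m a mass function on Θ with belief function b, and x ∈ Θ. Among all mass functions m' on Θ focused on x, with belief function b', the L1 distance ∑_{∅ ⊊ A ⊊ Θ} |b(A) − b'(A)| attains its minimum, the minimal value is ∑_{∅ ⊊ A ⊆ Θ \ {x}} b(A), and the minimum is attained uniquely by the focused consistent transformation m* defined by m*(A) = m(A) + m(A \ {x}) for every A with x ∈ A, and m*(A) = 0 for every nonempty A with x ∉ A. -/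
open Finset

variable {Θ : Type*}

lemma bel_inj [DecidableEq Θ] (m1 m2 : Finset Θ → ℝ) (h : ∀ A, bel m1 A = bel m2 A) :
    m1 = m2 := by
  funext A
  induction A using Finset.strongInduction with
  | _ A ih =>
    have hA : A ∈ A.powerset := Finset.mem_powerset_self A
    have h1 : m1 A + ∑ B ∈ A.powerset.erase A, m1 B = bel m1 A :=
      Finset.add_sum_erase _ _ hA
    have h2 : m2 A + ∑ B ∈ A.powerset.erase A, m2 B = bel m2 A :=
      Finset.add_sum_erase _ _ hA
    have hsum : ∑ B ∈ A.powerset.erase A, m1 B = ∑ B ∈ A.powerset.erase A, m2 B := by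
      refine Finset.sum_congr rfl fun B hB => ?_
      rw [Finset.mem_erase, Finset.mem_powerset] at hB
      exact ih B (lt_of_le_of_ne hB.2 hB.1)
    have := h A
    linarith

lemma bel_nonneg (m : Finset Θ → ℝ) (hm : ∀ A, 0 ≤ m A) (A : Finset Θ) : 0 ≤ bel m A :=
  Finset.sum_nonneg fun B _ => hm B

lemma bel_focused_zero [DecidableEq Θ] (m : Finset Θ → ℝ) (x : Θ) (hf : Focused m x)
    (A : Finset Θ) (hx : x ∉ A) : bel m A = 0 := by
  refine Finset.sum_eq_zero fun B hB => ?_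
  rw [Finset.mem_powerset] at hB
  by_contra hne
  exact hx (hB (hf B hne))

lemma bel_mstar_eq [DecidableEq Θ] (m : Finset Θ → ℝ) (x : Θ)
    (mstar : Finset Θ → ℝ)
    (hstar : ∀ A : Finset Θ, mstar A = if x ∈ A then m A + m (A \ {x}) else 0)
    (A : Finset Θ) (hx : x ∈ A) : bel mstar A = bel m A := by
  have h1 : bel mstar A = ∑ B ∈ A.powerset.filter (x ∈ ·), (m B + m (B \ {x})) := by
    unfold bel
    rw [Finset.sum_filter]
    exact Finset.sum_congr rfl fun B _ => hstar B
  rw [h1, Finset.sum_add_distrib]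
  have h2 : ∑ B ∈ A.powerset.filter (x ∈ ·), m (B \ {x}) =
      ∑ B ∈ A.powerset.filter (x ∉ ·), m B := by
    refine Finset.sum_nbij' (fun B => B \ {x}) (fun C => insert x C) ?_ ?_ ?_ ?_ ?_
    · intro B hB
      rw [Finset.mem_filter, Finset.mem_powerset] at *
      exact ⟨(Finset.sdiff_subset).trans hB.1, by simp⟩
    · intro C hC
      rw [Finset.mem_filter, Finset.mem_powerset] at *
      exact ⟨Finset.insert_subset hx hC.1, Finset.mem_insert_self x C⟩
    · intro B hB
      rw [Finset.mem_filter] at hB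
      show insert x (B \ {x}) = B
      rw [Finset.sdiff_singleton_eq_erase]
      exact Finset.insert_erase hB.2
    · intro C hC
      rw [Finset.mem_filter] at hC
      show insert x C \ {x} = C
      rw [Finset.sdiff_singleton_eq_erase]
      exact Finset.erase_insert hC.2
    · intro B _; rfl
  rw [h2]
  unfold bel
  rw [← Finset.sum_filter_add_sum_filter_not A.powerset (x ∈ ·)]

/-- The partial L1 consistent approximation in the belief space: among
mass functions focused on `x`, the L1 distance between belief functions (over nonempty
proper subsets) is minimized, with minimal value `∑_{∅ ⊊ A ⊆ {x}ᶜ} b(A)`, uniquely by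
the focused consistent transformation `m*(A) = m(A) + m(A \ {x})` for `x ∈ A`. -/
theorem stmt12 [Fintype Θ] [DecidableEq Θ] (hcard : 2 ≤ Fintype.card Θ)
    (m : Finset Θ → ℝ) (hm : IsMass m) (x : Θ)
    (mstar : Finset Θ → ℝ)
    (hstar : ∀ A : Finset Θ, mstar A = if x ∈ A then m A + m (A \ {x}) else 0) :
    IsMass mstar ∧ Focused mstar x ∧
    (∀ m' : Finset Θ → ℝ, IsMass m' → Focused m' x →
      (∑ A ∈ ({x}ᶜ : Finset Θ).powerset.filter (· ≠ ∅), bel m A) ≤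
        ∑ A ∈ Finset.univ.filter (fun A : Finset Θ => A ≠ ∅ ∧ A ≠ Finset.univ),
          |bel m A - bel m' A|) ∧
    (∑ A ∈ Finset.univ.filter (fun A : Finset Θ => A ≠ ∅ ∧ A ≠ Finset.univ),
        |bel m A - bel mstar A|) =
      ∑ A ∈ ({x}ᶜ : Finset Θ).powerset.filter (· ≠ ∅), bel m A ∧
    (∀ m' : Finset Θ → ℝ, IsMass m' → Focused m' x →
      (∑ A ∈ Finset.univ.filter (fun A : Finset Θ => A ≠ ∅ ∧ A ≠ Finset.univ),
          |bel m A - bel m' A|) =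
        (∑ A ∈ ({x}ᶜ : Finset Θ).powerset.filter (· ≠ ∅), bel m A) →
      m' = mstar) := by
  obtain ⟨hm0, hmnn, hm1⟩ := hm
  -- basic facts
  have hfoc : Focused mstar x := by
    intro A hA
    by_contra hx
    rw [hstar A, if_neg hx] at hA
    exact hA rfl
  have hmass : IsMass mstar := by
    refine ⟨by rw [hstar]; simp, fun A => ?_, ?_⟩
    · rw [hstar]
      split
      · exact add_nonneg (hmnn A) (hmnn _)
      · exact le_refl 0
    · have huniv : (Finset.univ : Finset (Finset Θ)) = Finset.univ.powerset := by
        simp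
      have h1 : ∑ A : Finset Θ, mstar A = bel mstar Finset.univ := by
        unfold bel; rw [← huniv]
      have h2 : ∑ A : Finset Θ, m A = bel m Finset.univ := by
        unfold bel; rw [← huniv]
      rw [h1, bel_mstar_eq m x mstar hstar _ (Finset.mem_univ x), ← h2, hm1]
  -- the two index sets
  set S := Finset.univ.filter (fun A : Finset Θ => A ≠ ∅ ∧ A ≠ Finset.univ) with hS
  set T := ({x}ᶜ : Finset Θ).powerset.filter (· ≠ ∅) with hT
  have hST : S.filter (x ∉ ·) = T := by
    ext A
    simp only [hS, hT, Finset.mem_filter, Finset.mem_univ, true_and, Finset.mem_powerset,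
      Finset.subset_compl_singleton]
    constructor
    · rintro ⟨⟨h1, _⟩, h2⟩; exact ⟨h2, h1⟩
    · rintro ⟨h1, h2⟩
      refine ⟨⟨h2, fun h => h1 ?_⟩, h1⟩
      rw [h]; exact Finset.mem_univ x
  have hsplit : ∀ m' : Finset Θ → ℝ, Focused m' x →
      (∑ A ∈ S, |bel m A - bel m' A|) =
        (∑ A ∈ S.filter (x ∈ ·), |bel m A - bel m' A|) + ∑ A ∈ T, bel m A := by
    intro m' hf
    rw [← Finset.sum_filter_add_sum_filter_not S (x ∈ ·), hST]
    congr 1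
    refine Finset.sum_congr rfl fun A hA => ?_
    rw [hT, Finset.mem_filter, Finset.mem_powerset, Finset.subset_compl_singleton] at hA
    rw [bel_focused_zero m' x hf A hA.1, sub_zero, abs_of_nonneg (bel_nonneg m hmnn A)]
  refine ⟨hmass, hfoc, ?_, ?_, ?_⟩
  · -- lower bound
    intro m' _ hf
    rw [hsplit m' hf]
    have : 0 ≤ ∑ A ∈ S.filter (x ∈ ·), |bel m A - bel m' A| :=
      Finset.sum_nonneg fun A _ => abs_nonneg _
    linarith
  · -- equality for mstar
    rw [hsplit mstar hfoc]
    have : ∑ A ∈ S.filter (x ∈ ·), |bel m A - bel mstar A| = 0 := by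
      refine Finset.sum_eq_zero fun A hA => ?_
      rw [Finset.mem_filter] at hA
      rw [bel_mstar_eq m x mstar hstar A hA.2, sub_self, abs_zero]
    linarith
  · -- uniqueness
    intro m' hm' hf heq
    obtain ⟨hm'0, hm'nn, hm'1⟩ := hm'
    rw [hsplit m' hf] at heq
    have hzero : ∑ A ∈ S.filter (x ∈ ·), |bel m A - bel m' A| = 0 := by linarith
    have hterm : ∀ A ∈ S.filter (x ∈ ·), |bel m A - bel m' A| = 0 :=
      (Finset.sum_eq_zero_iff_of_nonneg fun A _ => abs_nonneg _).mp hzero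
    refine bel_inj m' mstar fun A => ?_
    by_cases hx : x ∈ A
    · by_cases hA : A = Finset.univ
      · subst hA
        have huniv : (Finset.univ : Finset (Finset Θ)) = Finset.univ.powerset := by simp
        have h1 : bel m' Finset.univ = ∑ A : Finset Θ, m' A := by
          unfold bel; rw [← huniv]
        have h2 : bel mstar Finset.univ = ∑ A : Finset Θ, mstar A := by
          unfold bel; rw [← huniv]
        rw [h1, h2, hm'1, hmass.2.2]
      · have hAne : A ≠ ∅ := by rintro rfl; exact Finset.notMem_empty x hx
        have hmem : A ∈ S.filter (x ∈ ·) := by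
          rw [Finset.mem_filter, hS, Finset.mem_filter]
          exact ⟨⟨Finset.mem_univ A, hAne, hA⟩, hx⟩
        have := hterm A hmem
        rw [abs_eq_zero, sub_eq_zero] at this
        rw [← this, bel_mstar_eq m x mstar hstar A hx]
    · rw [bel_focused_zero m' x hf A hx, bel_focused_zero mstar x hfoc A hx]
end

section
/- Let Θ be a nonempty finite set, m a mass function on Θ with belief function b, and x ∈ Θ. Define the focused consistent transformation m* of m on x by m*(A) = m(A) + m(A \ {x}) for every A with x ∈ A, and m*(A) = 0 for every nonempty A with x ∉ A. Then m* is a mass function on Θ focused on x, and its belief function b* satisfies b*(A) = b(A) for every A ⊆ Θ with x ∈ A and b*(A) = 0 for every A ⊆ Θ with x ∉ A. Moreover, m* is the unique mass function focused on x whose belief function agrees with b on every subset of Θ containing x. -/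
open Finset

variable {Θ : Type*}

private lemma sdiff_bij_sum [DecidableEq Θ] (m : Finset Θ → ℝ) (A : Finset Θ) (x : Θ)
    (hx : x ∈ A) :
    ∑ B ∈ A.powerset.filter (fun B => x ∈ B), m (B \ {x})
      = ∑ B ∈ A.powerset.filter (fun B => x ∉ B), m B := by
  apply Finset.sum_nbij' (fun B => B \ {x}) (fun B => insert x B)
  · intro B hB
    simp only [mem_filter, mem_powerset] at *
    exact ⟨(sdiff_subset).trans hB.1, by simp⟩
  · intro B hB
    simp only [mem_filter, mem_powerset] at *
    exact ⟨insert_subset hx hB.1, mem_insert_self _ _⟩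
  · intro B hB
    simp only [mem_filter, mem_powerset] at hB
    rw [sdiff_singleton_eq_erase, insert_erase hB.2]
  · intro B hB
    simp only [mem_filter, mem_powerset] at hB
    rw [sdiff_singleton_eq_erase, erase_insert hB.2]
  · intro B hB; rfl

private lemma bel_star [DecidableEq Θ] (m mstar : Finset Θ → ℝ) (x : Θ)
    (hstar : ∀ A : Finset Θ, mstar A = if x ∈ A then m A + m (A \ {x}) else 0)
    (A : Finset Θ) (hx : x ∈ A) : bel mstar A = bel m A := by
  unfold bel
  rw [← Finset.sum_filter_add_sum_filter_not A.powerset (fun B => x ∈ B) mstar,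
      ← Finset.sum_filter_add_sum_filter_not A.powerset (fun B => x ∈ B) m]
  have h1 : ∑ B ∈ A.powerset.filter (fun B => x ∉ B), mstar B = 0 := by
    apply Finset.sum_eq_zero
    intro B hB
    simp only [mem_filter] at hB
    rw [hstar, if_neg hB.2]
  have h2 : ∑ B ∈ A.powerset.filter (fun B => x ∈ B), mstar B
      = ∑ B ∈ A.powerset.filter (fun B => x ∈ B), m B
        + ∑ B ∈ A.powerset.filter (fun B => x ∈ B), m (B \ {x}) := by
    rw [← Finset.sum_add_distrib]
    apply Finset.sum_congr rfl
    intro B hB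
    simp only [mem_filter] at hB
    rw [hstar, if_pos hB.2]
  rw [h1, h2, sdiff_bij_sum m A x hx, add_zero]

/-- The focused consistent transformation `m*(A) = m(A) + m(A \ {x})`
(for `x ∈ A`, zero otherwise) is a mass function focused on `x`, its belief function
agrees with `b` on all sets containing `x` and vanishes on sets not containing `x`,
and it is the unique such mass function. -/
theorem stmt14 [Fintype Θ] [DecidableEq Θ] [Nonempty Θ]
    (m : Finset Θ → ℝ) (hm : IsMass m) (x : Θ)
    (mstar : Finset Θ → ℝ)
    (hstar : ∀ A : Finset Θ, mstar A = if x ∈ A then m A + m (A \ {x}) else 0) :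
    IsMass mstar ∧ Focused mstar x ∧
    (∀ A : Finset Θ, x ∈ A → bel mstar A = bel m A) ∧
    (∀ A : Finset Θ, x ∉ A → bel mstar A = 0) ∧
    (∀ m' : Finset Θ → ℝ, IsMass m' → Focused m' x →
      (∀ A : Finset Θ, x ∈ A → bel m' A = bel m A) → m' = mstar) := by
  obtain ⟨hm0, hmpos, hmsum⟩ := hm
  have hfoc : Focused mstar x := by
    intro A hA
    by_contra h
    rw [hstar, if_neg h] at hA
    exact hA rfl
  have hstar0 : ∀ A : Finset Θ, x ∉ A → mstar A = 0 := fun A h => by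
    rw [hstar, if_neg h]
  have hmass : IsMass mstar := by
    refine ⟨hstar0 ∅ (notMem_empty x), fun A => ?_, ?_⟩
    · rw [hstar]
      split
      · exact add_nonneg (hmpos A) (hmpos _)
      · exact le_refl 0
    · have : (univ : Finset (Finset Θ)) = (univ : Finset Θ).powerset := by
        simp
      rw [this]
      have := bel_star m mstar x hstar univ (mem_univ x)
      unfold bel at this
      rw [this]
      rw [← hmsum]
      simp
  have hbel : ∀ A : Finset Θ, x ∈ A → bel mstar A = bel m A :=
    fun A hA => bel_star m mstar x hstar A hA
  have hbel0 : ∀ A : Finset Θ, x ∉ A → bel mstar A = 0 := by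
    intro A hA
    apply Finset.sum_eq_zero
    intro B hB
    rw [mem_powerset] at hB
    exact hstar0 B (fun h => hA (hB h))
  refine ⟨hmass, hfoc, hbel, hbel0, ?_⟩
  intro m' hm' hfoc' hbel'
  funext A
  induction A using Finset.strongInduction with
  | _ A ih =>
    by_cases hxA : x ∈ A
    · have key : ∀ (f : Finset Θ → ℝ), f A = bel f A - ∑ B ∈ A.powerset.erase A, f B := by
        intro f
        unfold bel
        rw [← Finset.add_sum_erase A.powerset f (mem_powerset_self A)]
        ring
      have hsum : ∑ B ∈ A.powerset.erase A, m' B = ∑ B ∈ A.powerset.erase A, mstar B := by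
        apply Finset.sum_congr rfl
        intro B hB
        rw [mem_erase, mem_powerset] at hB
        exact ih B (hB.2.ssubset_of_ne hB.1) -- ( (hB.2.ssubset_of_ne hB.1) (le_refl A))
      rw [key m', key mstar, hsum, hbel' A hxA, hbel A hxA]
    · rw [hstar0 A hxA]
      by_contra h
      exact hxA (hfoc' A h)
end

section
/- Let Θ be a finite set with at least two elements and m a mass function on Θ with belief function b. Then the minimum over all consistent mass functions m' on Θ (with belief function b') of the squared L2 distance ∑_{∅ ⊊ A ⊊ Θ} (b(A) − b'(A))² equals min_{x ∈ Θ} ∑_{∅ ⊊ A ⊆ Θ \ {x}} b(A)², and it is attained by the focused consistent transformation m*(A) = m(A) + m(A \ {x}) (for x ∈ A, and m*(A) = 0 otherwise) at any x minimizing ∑_{∅ ⊊ A ⊆ Θ \ {x}} b(A)². -/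
open Finset

variable {Θ : Type*}

lemma sum_erase_filter [DecidableEq Θ] (g : Finset Θ → ℝ) (s : Finset Θ) (x : Θ) (hx : x ∈ s) :
    ∑ B ∈ s.powerset.filter (fun B => x ∈ B), g (B \ {x})
      = ∑ B ∈ s.powerset.filter (fun B => x ∉ B), g B := by
  apply Finset.sum_nbij' (fun B => B.erase x) (fun B => insert x B)
  · intro B hB
    simp only [mem_filter, mem_powerset] at hB ⊢
    exact ⟨(Finset.erase_subset _ _).trans hB.1, Finset.notMem_erase _ _⟩
  · intro B hB
    simp only [mem_filter, mem_powerset] at hB ⊢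
    exact ⟨Finset.insert_subset hx hB.1, Finset.mem_insert_self _ _⟩
  · intro B hB
    simp only [mem_filter] at hB
    exact Finset.insert_erase hB.2
  · intro B hB
    simp only [mem_filter] at hB
    exact Finset.erase_insert hB.2
  · intro B hB
    rw [Finset.erase_eq]

lemma bel_focused_compl [DecidableEq Θ] {m : Finset Θ → ℝ} {x : Θ} (h0 : m ∅ = 0)
    (hfoc : ∀ A, m A ≠ 0 → x ∈ A) {A : Finset Θ} (hA : x ∉ A) : bel m A = 0 := by
  apply Finset.sum_eq_zero
  intro B hB
  rw [mem_powerset] at hB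
  by_contra hne
  exact hA (hB (hfoc B hne))

lemma mass_split [DecidableEq Θ] (m : Finset Θ → ℝ) (s : Finset Θ) (x : Θ) (hx : x ∈ s) :
    ∑ B ∈ s.powerset, (if x ∈ B then m B + m (B \ {x}) else 0)
      = ∑ B ∈ s.powerset, m B := by
  rw [← Finset.sum_filter, Finset.sum_add_distrib, sum_erase_filter m s x hx,
    Finset.sum_filter_add_sum_filter_not]


/-- The global L2 consistent approximation in the belief space: the
minimal squared L2 belief distance from `m` to the consistent mass functions equals
`min_x ∑_{∅ ⊊ A ⊆ {x}ᶜ} b(A)²`, and it is attained by the focused consistent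
transformation at any minimizing `x`. -/
theorem stmt17 [Fintype Θ] [DecidableEq Θ] [Nonempty Θ] (hcard : 2 ≤ Fintype.card Θ)
    (m : Finset Θ → ℝ) (hm : IsMass m)
    (f : Θ → ℝ)
    (hf : ∀ x : Θ,
      f x = ∑ A ∈ ({x}ᶜ : Finset Θ).powerset.filter (· ≠ ∅), (bel m A) ^ 2) :
    (∀ m' : Finset Θ → ℝ, IsMass m' → Consistent m' →
      Finset.univ.inf' Finset.univ_nonempty f ≤
        ∑ A ∈ Finset.univ.filter (fun A : Finset Θ => A ≠ ∅ ∧ A ≠ Finset.univ),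
          (bel m A - bel m' A) ^ 2) ∧
    (∀ x : Θ, f x = Finset.univ.inf' Finset.univ_nonempty f →
      ∀ mstar : Finset Θ → ℝ,
        (∀ A : Finset Θ, mstar A = if x ∈ A then m A + m (A \ {x}) else 0) →
        IsMass mstar ∧ Consistent mstar ∧
          (∑ A ∈ Finset.univ.filter (fun A : Finset Θ => A ≠ ∅ ∧ A ≠ Finset.univ),
              (bel m A - bel mstar A) ^ 2) =
            Finset.univ.inf' Finset.univ_nonempty f) := by
  constructor
  · intro m' hm' hcons
    obtain ⟨x, hx⟩ := hcons
    have hfoc : ∀ A : Finset Θ, m' A ≠ 0 → x ∈ A := by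
      intro A hA
      have := Set.mem_iInter₂.1 hx A hA
      exact_mod_cast this
    calc Finset.univ.inf' Finset.univ_nonempty f ≤ f x :=
          Finset.inf'_le f (Finset.mem_univ x)
      _ = ∑ A ∈ ({x}ᶜ : Finset Θ).powerset.filter (· ≠ ∅), (bel m A) ^ 2 := hf x
      _ = ∑ A ∈ ({x}ᶜ : Finset Θ).powerset.filter (· ≠ ∅), (bel m A - bel m' A) ^ 2 := by
          apply Finset.sum_congr rfl
          intro A hA
          simp only [mem_filter, mem_powerset] at hA
          have hxA : x ∉ A := fun h => by simpa using hA.1 h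
          rw [bel_focused_compl hm'.1 hfoc hxA, sub_zero]
      _ ≤ ∑ A ∈ Finset.univ.filter (fun A : Finset Θ => A ≠ ∅ ∧ A ≠ Finset.univ),
            (bel m A - bel m' A) ^ 2 := by
          apply Finset.sum_le_sum_of_subset_of_nonneg
          · intro A hA
            simp only [mem_filter, mem_powerset, mem_univ, true_and] at hA ⊢
            refine ⟨hA.2, ?_⟩
            rintro rfl
            have hxu : x ∉ (Finset.univ : Finset Θ) := fun h => by simpa using hA.1 h
            exact hxu (Finset.mem_univ x)
          · intro A _ _
            positivity
  · intro x hxmin mstar hstar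
    have h0 : mstar ∅ = 0 := by rw [hstar]; simp
    have hnn : ∀ A, 0 ≤ mstar A := by
      intro A
      rw [hstar]
      split
      · exact add_nonneg (hm.2.1 A) (hm.2.1 _)
      · exact le_refl 0
    have hfoc : ∀ A : Finset Θ, mstar A ≠ 0 → x ∈ A := by
      intro A hA
      by_contra hxA
      exact hA (by rw [hstar]; simp [hxA])
    have htot : ∑ A : Finset Θ, mstar A = 1 := by
      have h1 : ∑ A : Finset Θ, mstar A = ∑ A ∈ (Finset.univ : Finset Θ).powerset, mstar A := by
        rw [Finset.powerset_univ]
      have h2 : ∑ A ∈ (Finset.univ : Finset Θ).powerset, mstar A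
          = ∑ A ∈ (Finset.univ : Finset Θ).powerset,
              (if x ∈ A then m A + m (A \ {x}) else 0) :=
        Finset.sum_congr rfl (fun A _ => hstar A)
      rw [h1, h2, mass_split m _ x (Finset.mem_univ x), Finset.powerset_univ]
      exact hm.2.2
    have hmass : IsMass mstar := ⟨h0, hnn, htot⟩
    have hcons : Consistent mstar := by
      refine ⟨x, ?_⟩
      exact Set.mem_iInter₂.2 (fun A hA => by exact_mod_cast hfoc A hA)
    refine ⟨hmass, hcons, ?_⟩
    have hbel : ∀ A : Finset Θ, bel mstar A = if x ∈ A then bel m A else 0 := by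
      intro A
      by_cases hxA : x ∈ A
      · simp only [hxA, if_true]
        show ∑ B ∈ A.powerset, mstar B = bel m A
        rw [Finset.sum_congr rfl (fun B _ => hstar B), mass_split m A x hxA]
        rfl
      · simp only [hxA, if_false]
        exact bel_focused_compl h0 hfoc hxA
    rw [← hxmin, hf x]
    have hsum : ∑ A ∈ Finset.univ.filter (fun A : Finset Θ => A ≠ ∅ ∧ A ≠ Finset.univ),
        (bel m A - bel mstar A) ^ 2
        = ∑ A ∈ Finset.univ.filter (fun A : Finset Θ => A ≠ ∅ ∧ A ≠ Finset.univ),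
            (if x ∉ A then (bel m A) ^ 2 else 0) := by
      apply Finset.sum_congr rfl
      intro A _
      rw [hbel A]
      by_cases hxA : x ∈ A
      · simp [hxA]
      · simp [hxA]
    rw [hsum, ← Finset.sum_filter]
    apply Finset.sum_congr
    · ext A
      simp only [mem_filter, mem_powerset, mem_univ, true_and]
      constructor
      · rintro ⟨⟨hne, _⟩, hxA⟩
        exact ⟨Finset.subset_compl_singleton.2 hxA, hne⟩
      · rintro ⟨hsub, hne⟩
        have hxA : x ∉ A := Finset.subset_compl_singleton.1 hsub
        refine ⟨⟨hne, ?_⟩, hxA⟩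
        rintro rfl
        exact hxA (Finset.mem_univ x)
    · intro A _
      rfl
end

section
/- Let Θ be a finite set with at least two elements and m a mass function on Θ. Then the minimum over all consistent mass functions m' on Θ of the L∞ distance max_{∅ ⊊ B ⊊ Θ} |m(B) − m'(B)| equals min_{x ∈ Θ} max_{∅ ⊊ C ⊊ Θ : x ∉ C} m(C); that is, the global L∞ consistent approximation in the mass space is associated with the elements x minimizing the maximal mass outside the filter of sets containing x. -/
open Finset

variable {Θ : Type*}

/-- The global L∞ consistent approximation in the mass space: the
minimal L∞ mass distance from `m` to the consistent mass functions equals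
`min_x max_{∅ ⊊ C ⊊ Θ, x ∉ C} m(C)`. -/
theorem stmt19 [Fintype Θ] [DecidableEq Θ] [Nonempty Θ] (hcard : 2 ≤ Fintype.card Θ)
    (m : Finset Θ → ℝ) (hm : IsMass m)
    (h2 : (Finset.univ.filter
      (fun B : Finset Θ => B ≠ ∅ ∧ B ≠ Finset.univ)).Nonempty)
    (h1 : ∀ x : Θ, (Finset.univ.filter
      (fun C : Finset Θ => C ≠ ∅ ∧ C ≠ Finset.univ ∧ x ∉ C)).Nonempty) :
    IsLeast {d : ℝ | ∃ m' : Finset Θ → ℝ, IsMass m' ∧ Consistent m' ∧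
        d = (Finset.univ.filter (fun B : Finset Θ => B ≠ ∅ ∧ B ≠ Finset.univ)).sup' h2
              (fun B => |m B - m' B|)}
      (Finset.univ.inf' Finset.univ_nonempty
        (fun x : Θ =>
          (Finset.univ.filter
            (fun C : Finset Θ => C ≠ ∅ ∧ C ≠ Finset.univ ∧ x ∉ C)).sup' (h1 x) m)) := by
  
  obtain ⟨hm0, hmpos, hmsum⟩ := hm
  constructor
  · -- membership: construct the optimal consistent approximation
    obtain ⟨x₀, -, hx₀⟩ := Finset.exists_mem_eq_inf' (Finset.univ_nonempty (α := Θ))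
      (fun x : Θ => (Finset.univ.filter
        (fun C : Finset Θ => C ≠ ∅ ∧ C ≠ Finset.univ ∧ x ∉ C)).sup' (h1 x) m)
    set S : ℝ := ∑ C ∈ Finset.univ.filter (fun C : Finset Θ => x₀ ∉ C), m C with hS
    have hSnn : 0 ≤ S := Finset.sum_nonneg fun C _ => hmpos C
    set m' : Finset Θ → ℝ := fun A =>
      (if x₀ ∈ A then m A else 0) + (if A = Finset.univ then S else 0) with hm'
    have hunivne : (∅ : Finset Θ) ≠ Finset.univ := by
      intro h
      have := Finset.univ_nonempty (α := Θ)
      rw [← h] at this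
      exact Finset.not_nonempty_empty this
    have hfoc : ∀ A, m' A ≠ 0 → x₀ ∈ A := by
      intro A hA
      by_contra hx
      apply hA
      have hAne : A ≠ Finset.univ := fun h => hx (h ▸ Finset.mem_univ x₀)
      simp [hm', hx, hAne]
    refine ⟨m', ⟨?_, ?_, ?_⟩, ⟨x₀, ?_⟩, ?_⟩
    · simp [hm', hunivne]
    · intro A
      have ha : (0:ℝ) ≤ if x₀ ∈ A then m A else 0 := by
        split_ifs <;> simp [hmpos A]
      have hb : (0:ℝ) ≤ if A = Finset.univ then S else 0 := by
        split_ifs <;> simp [hSnn]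
      simp only [hm']
      linarith
    · simp only [hm', Finset.sum_add_distrib]
      rw [Finset.sum_ite_eq' Finset.univ Finset.univ (fun _ => S)]
      rw [← Finset.sum_filter]
      have := Finset.sum_filter_add_sum_filter_not Finset.univ
        (fun A : Finset Θ => x₀ ∈ A) m
      simp only [Finset.mem_univ, if_true, ← hS]
      linarith [hmsum, this]
    · exact Set.mem_iInter₂.mpr fun A hA => hfoc A hA
    · rw [hx₀]
      have h0le : (0:ℝ) ≤ (Finset.univ.filter
          (fun C : Finset Θ => C ≠ ∅ ∧ C ≠ Finset.univ ∧ x₀ ∉ C)).sup' (h1 x₀) m := by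
        obtain ⟨C, hC⟩ := h1 x₀
        exact le_trans (hmpos C) (Finset.le_sup' m hC)
      apply le_antisymm
      · apply Finset.sup'_le
        intro C hC
        simp only [Finset.mem_filter, Finset.mem_univ, true_and] at hC
        obtain ⟨hCne, hCnu, hCx⟩ := hC
        have hmC : m' C = 0 := by simp [hm', hCx, hCnu]
        have : m C = |m C - m' C| := by
          rw [hmC, sub_zero, abs_of_nonneg (hmpos C)]
        rw [this]
        refine Finset.le_sup' (fun B => |m B - m' B|) ?_
        exact Finset.mem_filter.mpr ⟨Finset.mem_univ C, hCne, hCnu⟩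
      · apply Finset.sup'_le
        intro B hB
        simp only [Finset.mem_filter, Finset.mem_univ, true_and] at hB
        obtain ⟨hBne, hBnu⟩ := hB
        by_cases hxB : x₀ ∈ B
        · have : m' B = m B := by simp [hm', hxB, hBnu]
          rw [this]
          simpa using h0le
        · have : m' B = 0 := by simp [hm', hxB, hBnu]
          rw [this, sub_zero, abs_of_nonneg (hmpos B)]
          refine Finset.le_sup' m ?_
          exact Finset.mem_filter.mpr ⟨Finset.mem_univ B, hBne, hBnu, hxB⟩
  · rintro d ⟨m', ⟨hm'0, hm'pos, hm'sum⟩, ⟨x, hx⟩, rfl⟩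
    have hfoc : ∀ A, m' A ≠ 0 → x ∈ A := fun A hA => by
      have := Set.mem_iInter₂.mp hx A hA
      exact this
    refine le_trans (Finset.inf'_le _ (Finset.mem_univ x)) (Finset.sup'_le _ _ ?_)
    intro C hC
    simp only [Finset.mem_filter, Finset.mem_univ, true_and] at hC
    obtain ⟨hCne, hCnu, hCx⟩ := hC
    have hC0 : m' C = 0 := by
      by_contra h
      exact hCx (hfoc C h)
    have : m C = |m C - m' C| := by
      rw [hC0, sub_zero, abs_of_nonneg (hmpos C)]
    rw [this]
    refine Finset.le_sup' (fun B => |m B - m' B|) ?_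
    exact Finset.mem_filter.mpr ⟨Finset.mem_univ C, hCne, hCnu⟩
end
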